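/- Let ν > 0 and μ > 0. Let u = (u¹,u²) : ℝ × ℝ² → ℝ², ω : ℝ × ℝ² → ℝ and F : ℝ² → ℝ be smooth functions, 2π-periodic in each spatial variable, with ∂₁u¹(t,x) + ∂₂u²(t,x) = 0 for all (t,x), and suppose that ∂_t ω + u·∇ω = ν Δω − μ ω + F holds at every point of ℝ × ℝ². If sup_{t∈ℝ} ‖ω(t,·)‖_{L^∞(Ω)} < ∞, then for every t ∈ ℝ one has ‖ω(t,·)‖_{L^∞(Ω)} ≤ ‖F‖_{L^∞(Ω)} / μ. -/

import Mathlib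

open Real Set MeasureTheory Filter Topology

/-- Partial derivative in time of a function on ℝ × ℝ² (time, space). -/
noncomputable def dt (g : ℝ × ℝ × ℝ → ℝ) (p : ℝ × ℝ × ℝ) : ℝ :=
  fderiv ℝ g p (1, 0, 0)

/-- First spatial partial derivative. -/
noncomputable def dx1 (g : ℝ × ℝ × ℝ → ℝ) (p : ℝ × ℝ × ℝ) : ℝ :=
  fderiv ℝ g p (0, 1, 0)

/-- Second spatial partial derivative. -/
noncomputable def dx2 (g : ℝ × ℝ × ℝ → ℝ) (p : ℝ × ℝ × ℝ) : ℝ :=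
  fderiv ℝ g p (0, 0, 1)

/-- Spatial Laplacian. -/
noncomputable def lap (g : ℝ × ℝ × ℝ → ℝ) (p : ℝ × ℝ × ℝ) : ℝ :=
  dx1 (dx1 g) p + dx2 (dx2 g) p

/-- The periodic square Ω = [0,2π]². -/
def Om : Set (ℝ × ℝ) := Icc (0:ℝ) (2 * π) ×ˢ Icc (0:ℝ) (2 * π)

lemma aux_smooth_dv (g : ℝ × ℝ × ℝ → ℝ) (hg : ContDiff ℝ (⊤ : ℕ∞) g) (v : ℝ × ℝ × ℝ) :
    ContDiff ℝ (⊤ : ℕ∞) (fun p => fderiv ℝ g p v) :=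
  (ContinuousLinearMap.apply ℝ ℝ v).contDiff.comp (hg.fderiv_right (by simp))

lemma aux_smooth_dx1 (g : ℝ × ℝ × ℝ → ℝ) (hg : ContDiff ℝ (⊤ : ℕ∞) g) :
    ContDiff ℝ (⊤ : ℕ∞) (dx1 g) := aux_smooth_dv g hg _

lemma aux_hasDerivAt_t (g : ℝ × ℝ × ℝ → ℝ) (hg : ContDiff ℝ (⊤ : ℕ∞) g) (t x1 x2 : ℝ) :
    HasDerivAt (fun τ => g (τ, x1, x2)) (dt g (t, x1, x2)) t := by
  have h := (hg.differentiable (by simp) (t, x1, x2)).hasFDerivAt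
  have h2 : HasDerivAt (fun τ : ℝ => ((τ, x1, x2) : ℝ × ℝ × ℝ)) ((1:ℝ), (0:ℝ), (0:ℝ)) t :=
    HasDerivAt.prodMk (hasDerivAt_id t) (HasDerivAt.prodMk (hasDerivAt_const t x1) (hasDerivAt_const t x2))
  exact h.comp_hasDerivAt t h2

lemma aux_hasDerivAt_x1 (g : ℝ × ℝ × ℝ → ℝ) (hg : ContDiff ℝ (⊤ : ℕ∞) g) (t x1 x2 : ℝ) :
    HasDerivAt (fun y => g (t, y, x2)) (dx1 g (t, x1, x2)) x1 := by
  have h := (hg.differentiable (by simp) (t, x1, x2)).hasFDerivAt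
  have h2 : HasDerivAt (fun y : ℝ => ((t, y, x2) : ℝ × ℝ × ℝ)) ((0:ℝ), (1:ℝ), (0:ℝ)) x1 :=
    HasDerivAt.prodMk (hasDerivAt_const x1 t) (HasDerivAt.prodMk (hasDerivAt_id x1) (hasDerivAt_const x1 x2))
  exact h.comp_hasDerivAt x1 h2

lemma aux_hasDerivAt_x2 (g : ℝ × ℝ × ℝ → ℝ) (hg : ContDiff ℝ (⊤ : ℕ∞) g) (t x1 x2 : ℝ) :
    HasDerivAt (fun y => g (t, x1, y)) (dx2 g (t, x1, x2)) x2 := by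
  have h := (hg.differentiable (by simp) (t, x1, x2)).hasFDerivAt
  have h2 : HasDerivAt (fun y : ℝ => ((t, x1, y) : ℝ × ℝ × ℝ)) ((0:ℝ), (0:ℝ), (1:ℝ)) x2 :=
    HasDerivAt.prodMk (hasDerivAt_const x2 t) (HasDerivAt.prodMk (hasDerivAt_const x2 x1) (hasDerivAt_id x2))
  exact h.comp_hasDerivAt x2 h2

lemma aux_second_le_zero {f f' : ℝ → ℝ} {a d : ℝ}
    (hf : ∀ y, HasDerivAt f (f' y) y)
    (hd : HasDerivAt f' d a)
    (hmax : ∀ y, f y ≤ f a) : d ≤ 0 := by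
  by_contra hpos
  push_neg at hpos
  have hfa : f' a = 0 :=
    IsLocalMax.hasDerivAt_eq_zero (Filter.Eventually.of_forall hmax) (hf a)
  have hslope : Tendsto (slope f' a) (𝓝[>] a) (𝓝 d) :=
    (hasDerivAt_iff_tendsto_slope.mp hd).mono_left
      (nhdsWithin_mono a fun x hx => Set.mem_compl_singleton_iff.mpr (ne_of_gt hx))
  have h1 : ∀ᶠ y in 𝓝[>] a, 0 < slope f' a y := hslope.eventually (eventually_gt_nhds hpos)
  have h2 : ∀ᶠ y in 𝓝[>] a, 0 < f' y := by
    filter_upwards [h1, self_mem_nhdsWithin] with y hy hya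
    have hs : slope f' a y = f' y / (y - a) := by rw [slope_def_field, hfa, sub_zero]
    rw [hs] at hy
    rcases div_pos_iff.mp hy with ⟨h, _⟩ | ⟨_, h⟩
    · exact h
    · have : (0:ℝ) < y - a := sub_pos.mpr hya
      linarith
  obtain ⟨b, hb, hsub⟩ := mem_nhdsGT_iff_exists_Ioo_subset.mp h2
  have hmono : StrictMonoOn f (Icc a b) := by
    apply strictMonoOn_of_deriv_pos (convex_Icc a b)
    · exact fun y _ => (hf y).continuousAt.continuousWithinAt
    · intro y hy
      rw [interior_Icc] at hy
      rw [(hf y).deriv]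
      exact hsub hy
  have hab : a < b := hb
  have : f a < f b :=
    hmono (left_mem_Icc.mpr hab.le) (right_mem_Icc.mpr hab.le) hab
  exact absurd (hmax b) (not_le.mpr this)

lemma aux_left_deriv_nonneg {g : ℝ → ℝ} {a d s : ℝ} (hs : s < a)
    (hg : HasDerivAt g d a) (h : ∀ τ ∈ Ioo s a, g τ ≤ g a) : 0 ≤ d := by
  have h1 : Tendsto (slope g a) (𝓝[<] a) (𝓝 d) :=
    (hasDerivAt_iff_tendsto_slope.mp hg).mono_left
      (nhdsWithin_mono a fun x hx => Set.mem_compl_singleton_iff.mpr (ne_of_lt hx))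
  refine ge_of_tendsto h1 ?_
  filter_upwards [Ioo_mem_nhdsLT_of_mem (⟨hs, le_refl a⟩ : a ∈ Ioc s a)] with τ hτ
  rw [slope_def_field]
  have h1' : g τ - g a ≤ 0 := by linarith [h τ hτ]
  have h2' : τ - a ≤ 0 := by linarith [hτ.2]
  have := div_nonneg (neg_nonneg.2 h1') (neg_nonneg.2 h2')
  rwa [neg_div_neg_eq] at this

lemma dt_neg (g : ℝ × ℝ × ℝ → ℝ) (p : ℝ × ℝ × ℝ) : dt (fun q => -g q) p = -dt g p := by
  simp [dt, fderiv_neg]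

lemma dx1_neg (g : ℝ × ℝ × ℝ → ℝ) : (dx1 fun q => -g q) = fun p => -dx1 g p :=
  funext fun p => by simp [dx1, fderiv_neg]

lemma dx2_neg (g : ℝ × ℝ × ℝ → ℝ) : (dx2 fun q => -g q) = fun p => -dx2 g p :=
  funext fun p => by simp [dx2, fderiv_neg]

lemma lap_neg (g : ℝ × ℝ × ℝ → ℝ) (p : ℝ × ℝ × ℝ) : lap (fun q => -g q) p = -lap g p := by
  simp only [lap, dx1_neg, dx2_neg]
  ring

lemma Om_compact : IsCompact Om := isCompact_Icc.prod isCompact_Icc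

lemma Om_zero_mem : ((0:ℝ), (0:ℝ)) ∈ Om := by
  constructor <;> exact ⟨le_refl 0, by positivity⟩

lemma key_comparison (ν μ : ℝ) (hν : 0 < ν) (hμ : 0 < μ)
    (u1 u2 ω : ℝ × ℝ × ℝ → ℝ) (F : ℝ × ℝ → ℝ)
    (hω : ContDiff ℝ (⊤ : ℕ∞) ω)
    (hωper : ∀ t x₁ x₂ : ℝ, ω (t, x₁ + 2 * π, x₂) = ω (t, x₁, x₂) ∧
      ω (t, x₁, x₂ + 2 * π) = ω (t, x₁, x₂))
    (hPDE : ∀ p : ℝ × ℝ × ℝ,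
      dt ω p + (u1 p * dx1 ω p + u2 p * dx2 ω p)
        = ν * lap ω p - μ * ω p + F p.2)
    (K C : ℝ)
    (hF : ∀ x ∈ Om, F x ≤ μ * K)
    (hC : ∀ t : ℝ, ∀ x ∈ Om, ω (t, x) ≤ C)
    (s t ε : ℝ) (hst : s ≤ t) (hε : 0 < ε) :
    ∀ τ ∈ Icc s t, ∀ x ∈ Om,
      ω (τ, x) < Real.exp (-μ * (τ - s)) * (C - K) + (K + ε * (1 + (τ - s))) := by
  set B : ℝ → ℝ := fun τ => Real.exp (-μ * (τ - s)) * (C - K) + (K + ε * (1 + (τ - s))) with hB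
  by_contra hcon
  push_neg at hcon
  obtain ⟨τ₀, hτ₀, x₀, hx₀, hge⟩ := hcon
  have hBc : Continuous B := by fun_prop
  have hBs : B s = C + ε := by simp [hB]; ring
  -- the "touching set"
  set T : Set ℝ :=
    Prod.fst '' ((Icc s t ×ˢ Om) ∩ {p : ℝ × ℝ × ℝ | 0 ≤ ω p - B p.1}) with hT
  have hTcpt : IsCompact T := by
    refine IsCompact.image ?_ continuous_fst
    exact (isCompact_Icc.prod Om_compact).inter_right
      (isClosed_le continuous_const (hω.continuous.sub (hBc.comp continuous_fst)))
  have hTne : T.Nonempty :=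
    ⟨τ₀, (τ₀, x₀), ⟨Set.mem_prod.mpr ⟨hτ₀, hx₀⟩, sub_nonneg.mpr hge⟩, rfl⟩
  set τs : ℝ := sInf T with hτs
  have hτsT : τs ∈ T := hTcpt.isClosed.csInf_mem hTne hTcpt.bddBelow
  obtain ⟨p₀, ⟨hp₀m, hp₀H⟩, hp₀fst⟩ := hτsT
  have hp₀Icc : τs ∈ Icc s t := hp₀fst ▸ (Set.mem_prod.mp hp₀m).1
  have hp₀Om : p₀.2 ∈ Om := (Set.mem_prod.mp hp₀m).2
  have hp₀H' : 0 ≤ ω (τs, p₀.2) - B τs := by rw [← hp₀fst]; exact hp₀H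
  -- below τs everything is strictly below the barrier
  have hlow : ∀ τ, s ≤ τ → τ < τs → ∀ x ∈ Om, ω (τ, x) - B τ < 0 := by
    intro τ hsτ hττ x hx
    by_contra hcon2
    push_neg at hcon2
    have : τ ∈ T :=
      ⟨(τ, x), ⟨Set.mem_prod.mpr ⟨⟨hsτ, hττ.le.trans hp₀Icc.2⟩, hx⟩, hcon2⟩, rfl⟩
    exact absurd (csInf_le hTcpt.bddBelow this) (not_le.mpr hττ)
  -- s < τs
  have hsτs : s < τs := by
    rcases lt_or_eq_of_le hp₀Icc.1 with h | h
    · exact h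
    · exfalso
      have h1 : ω (τs, p₀.2) ≤ C := hC τs p₀.2 hp₀Om
      have h2 : B τs = C + ε := by rw [← h, hBs]
      rw [h2] at hp₀H'
      linarith
  -- the spatial max at time τs
  obtain ⟨xs, hxsOm, hxsmax⟩ :=
    Om_compact.exists_isMaxOn ⟨((0:ℝ),(0:ℝ)), Om_zero_mem⟩
      ((hω.continuous.comp (continuous_const.prodMk continuous_id)).continuousOn :
        ContinuousOn (fun x : ℝ × ℝ => ω (τs, x)) Om)
  have hmax : ∀ x ∈ Om, ω (τs, x) ≤ ω (τs, xs) := fun x hx => hxsmax hx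
  have hxs1 : xs.1 ∈ Icc (0:ℝ) (2*π) := (Set.mem_prod.mp hxsOm).1
  have hxs2 : xs.2 ∈ Icc (0:ℝ) (2*π) := (Set.mem_prod.mp hxsOm).2
  have hH0 : 0 ≤ ω (τs, xs) - B τs := le_trans hp₀H' (by linarith [hmax p₀.2 hp₀Om])
  -- global (in space) maximality via periodicity
  have hglob1 : ∀ y : ℝ, ω (τs, y, xs.2) ≤ ω (τs, xs) := by
    intro y
    have hper : Function.Periodic (fun z => ω (τs, z, xs.2)) (2 * π) :=
      fun z => (hωper τs z xs.2).1
    obtain ⟨z, hz, hzy⟩ := hper.exists_mem_Ico₀ Real.two_pi_pos y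
    calc ω (τs, y, xs.2) = ω (τs, z, xs.2) := hzy
      _ ≤ ω (τs, xs) := hmax (z, xs.2) (Set.mem_prod.mpr ⟨Ico_subset_Icc_self hz, hxs2⟩)
  have hglob2 : ∀ y : ℝ, ω (τs, xs.1, y) ≤ ω (τs, xs) := by
    intro y
    have hper : Function.Periodic (fun z => ω (τs, xs.1, z)) (2 * π) :=
      fun z => (hωper τs xs.1 z).2
    obtain ⟨z, hz, hzy⟩ := hper.exists_mem_Ico₀ Real.two_pi_pos y
    calc ω (τs, xs.1, y) = ω (τs, xs.1, z) := hzy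
      _ ≤ ω (τs, xs) := hmax (xs.1, z) (Set.mem_prod.mpr ⟨hxs1, Ico_subset_Icc_self hz⟩)
  -- first spatial derivatives vanish, second derivatives are ≤ 0
  set ps : ℝ × ℝ × ℝ := (τs, xs.1, xs.2) with hps
  have hωps : ω ps = ω (τs, xs) := rfl
  have hd1 : dx1 ω ps = 0 :=
    IsLocalMax.hasDerivAt_eq_zero (Filter.Eventually.of_forall hglob1)
      (aux_hasDerivAt_x1 ω hω τs xs.1 xs.2)
  have hd2 : dx2 ω ps = 0 :=
    IsLocalMax.hasDerivAt_eq_zero (Filter.Eventually.of_forall hglob2)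
      (aux_hasDerivAt_x2 ω hω τs xs.1 xs.2)
  have hd11 : dx1 (dx1 ω) ps ≤ 0 := by
    refine aux_second_le_zero (f := fun y => ω (τs, y, xs.2))
      (f' := fun y => dx1 ω (τs, y, xs.2))
      (fun y => aux_hasDerivAt_x1 ω hω τs y xs.2)
      (aux_hasDerivAt_x1 (dx1 ω) (aux_smooth_dv ω hω _) τs xs.1 xs.2) hglob1
  have hd22 : dx2 (dx2 ω) ps ≤ 0 := by
    refine aux_second_le_zero (f := fun y => ω (τs, xs.1, y))
      (f' := fun y => dx2 ω (τs, xs.1, y))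
      (fun y => aux_hasDerivAt_x2 ω hω τs xs.1 y)
      (aux_hasDerivAt_x2 (dx2 ω) (aux_smooth_dv ω hω _) τs xs.1 xs.2) hglob2
  -- derivative of the barrier
  have hBd : HasDerivAt B (Real.exp (-μ * (τs - s)) * -μ * (C - K) + ε) τs := by
    have e1 : HasDerivAt (fun τ : ℝ => -μ * (τ - s)) (-μ) τs := by
      simpa using ((hasDerivAt_id τs).sub_const s).const_mul (-μ)
    have e2 := (Real.hasDerivAt_exp (-μ * (τs - s))).comp τs e1
    have e3 := e2.mul_const (C - K)
    have e4 : HasDerivAt (fun τ : ℝ => K + ε * (1 + (τ - s))) ε τs := by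
      simpa using ((((hasDerivAt_id τs).sub_const s).const_add 1).const_mul ε).const_add K
    exact e3.add e4
  -- time derivative of ω - B at (τs, xs) is nonnegative
  have htd : HasDerivAt (fun τ => ω (τ, xs.1, xs.2) - B τ)
      (dt ω ps - (Real.exp (-μ * (τs - s)) * -μ * (C - K) + ε)) τs :=
    (aux_hasDerivAt_t ω hω τs xs.1 xs.2).sub hBd
  have htge : 0 ≤ dt ω ps - (Real.exp (-μ * (τs - s)) * -μ * (C - K) + ε) := by
    refine aux_left_deriv_nonneg hsτs htd ?_
    intro τ hτ
    have h1 := hlow τ hτ.1.le hτ.2 xs hxsOm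
    have h2 : ω (τ, xs.1, xs.2) = ω (τ, xs) := rfl
    linarith [hH0]
  -- assemble the contradiction from the PDE
  have hpde := hPDE ps
  rw [hd1, hd2] at hpde
  have hlapω : lap ω ps ≤ 0 := by
    have : lap ω ps = dx1 (dx1 ω) ps + dx2 (dx2 ω) ps := rfl
    linarith
  have hνlap : ν * lap ω ps ≤ 0 := mul_nonpos_iff.mpr (Or.inl ⟨hν.le, hlapω⟩)
  have hFps : F ps.2 ≤ μ * K := hF xs hxsOm
  have hωB : B τs ≤ ω ps := by rw [hωps]; linarith
  have hD : 0 ≤ τs - s := by linarith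
  set E : ℝ := Real.exp (-μ * (τs - s)) with hE
  have hBval : B τs = E * (C - K) + (K + ε * (1 + (τs - s))) := rfl
  -- dt ω ps ≤ -μ * ω ps + μ K ≤ -μ B τs + μ K
  have hup : dt ω ps ≤ -μ * (E * (C - K) + (K + ε * (1 + (τs - s)))) + μ * K := by
    have h1 : dt ω ps = ν * lap ω ps - μ * ω ps + F ps.2 := by linarith
    have h2 : μ * (E * (C - K) + (K + ε * (1 + (τs - s)))) ≤ μ * ω ps := by
      rw [← hBval]; exact mul_le_mul_of_nonneg_left hωB hμ.le
    linarith
  have hdown : E * -μ * (C - K) + ε ≤ dt ω ps := by linarith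
  nlinarith [mul_pos hμ hε, mul_nonneg (mul_nonneg hμ.le hε.le) hD]

lemma key_bound (ν μ : ℝ) (hν : 0 < ν) (hμ : 0 < μ)
    (u1 u2 ω : ℝ × ℝ × ℝ → ℝ) (F : ℝ × ℝ → ℝ)
    (hω : ContDiff ℝ (⊤ : ℕ∞) ω)
    (hωper : ∀ t x₁ x₂ : ℝ, ω (t, x₁ + 2 * π, x₂) = ω (t, x₁, x₂) ∧
      ω (t, x₁, x₂ + 2 * π) = ω (t, x₁, x₂))
    (hPDE : ∀ p : ℝ × ℝ × ℝ,
      dt ω p + (u1 p * dx1 ω p + u2 p * dx2 ω p)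
        = ν * lap ω p - μ * ω p + F p.2)
    (K C : ℝ) (hKC : K ≤ C)
    (hF : ∀ x ∈ Om, F x ≤ μ * K)
    (hC : ∀ t : ℝ, ∀ x ∈ Om, ω (t, x) ≤ C) :
    ∀ t : ℝ, ∀ x ∈ Om, ω (t, x) ≤ K := by
  intro t x hx
  by_contra hcon
  push_neg at hcon
  set η : ℝ := ω (t, x) - K with hη
  have hη0 : 0 < η := by linarith
  have hCK : 0 ≤ C - K := by linarith
  -- choose R large so that the exponential term is < η/2
  have htend : Tendsto (fun R : ℝ => Real.exp (-(μ * R)) * (C - K)) atTop (𝓝 0) := by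
    have h1 : Tendsto (fun R : ℝ => -(μ * R)) atTop atBot :=
      tendsto_neg_atTop_atBot.comp (Tendsto.const_mul_atTop hμ tendsto_id)
    have h2 := (Real.tendsto_exp_atBot.comp h1).mul_const (C - K)
    simpa using h2
  obtain ⟨R, hR1, hR2⟩ :=
    ((htend.eventually_lt_const (show (0:ℝ) < η / 2 by positivity)).and
      (eventually_ge_atTop (1:ℝ))).exists
  set s : ℝ := t - R with hs
  have hst : s ≤ t := by simp [hs]; linarith
  set ε : ℝ := η / (4 * (1 + R)) with hεdef
  have hR0 : (0:ℝ) < 1 + R := by linarith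
  have hε : 0 < ε := by positivity
  have hmain := key_comparison ν μ hν hμ u1 u2 ω F hω hωper hPDE K C hF hC s t ε hst hε
    t ⟨hst, le_refl t⟩ x hx
  have hts : t - s = R := by simp [hs]
  rw [hts] at hmain
  have hε1 : ε * (1 + R) = η / 4 := by
    rw [hεdef, div_mul_eq_mul_div, div_eq_div_iff (by positivity) (by norm_num)]
    ring
  rw [hε1] at hmain
  have hexp : Real.exp (-μ * R) * (C - K) < η / 2 := by
    have : -μ * R = -(μ * R) := by ring
    rw [this]; exact hR1
  linarith

/-- On the global attractor (here: for solutions of the damped-driven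
vorticity equation whose `L^∞` norm is bounded uniformly in time),
the vorticity satisfies `‖ω(t,·)‖_{L^∞} ≤ ‖rot f‖_{L^∞} / μ`. -/
theorem vorticity_Linfty_bound_on_attractor
    (ν μ : ℝ) (hν : 0 < ν) (hμ : 0 < μ)
    (u1 u2 ω : ℝ × ℝ × ℝ → ℝ) (F : ℝ × ℝ → ℝ)
    (hu1 : ContDiff ℝ (⊤ : ℕ∞) u1) (hu2 : ContDiff ℝ (⊤ : ℕ∞) u2)
    (hω : ContDiff ℝ (⊤ : ℕ∞) ω) (hF : ContDiff ℝ (⊤ : ℕ∞) F)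
    (hu1per : ∀ t x₁ x₂ : ℝ, u1 (t, x₁ + 2 * π, x₂) = u1 (t, x₁, x₂) ∧
      u1 (t, x₁, x₂ + 2 * π) = u1 (t, x₁, x₂))
    (hu2per : ∀ t x₁ x₂ : ℝ, u2 (t, x₁ + 2 * π, x₂) = u2 (t, x₁, x₂) ∧
      u2 (t, x₁, x₂ + 2 * π) = u2 (t, x₁, x₂))
    (hωper : ∀ t x₁ x₂ : ℝ, ω (t, x₁ + 2 * π, x₂) = ω (t, x₁, x₂) ∧
      ω (t, x₁, x₂ + 2 * π) = ω (t, x₁, x₂))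
    (hFper : ∀ x₁ x₂ : ℝ, F (x₁ + 2 * π, x₂) = F (x₁, x₂) ∧
      F (x₁, x₂ + 2 * π) = F (x₁, x₂))
    (hdiv : ∀ p : ℝ × ℝ × ℝ, dx1 u1 p + dx2 u2 p = 0)
    (hPDE : ∀ p : ℝ × ℝ × ℝ,
      dt ω p + (u1 p * dx1 ω p + u2 p * dx2 ω p)
        = ν * lap ω p - μ * ω p + F p.2)
    (hbdd : ∃ C : ℝ, ∀ t : ℝ,
      sSup ((fun x : ℝ × ℝ => |ω (t, x)|) '' Om) ≤ C) :
    ∀ t : ℝ,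
      sSup ((fun x : ℝ × ℝ => |ω (t, x)|) '' Om)
        ≤ sSup ((fun x : ℝ × ℝ => |F x|) '' Om) / μ := by
  intro t
  obtain ⟨C₀, hC₀⟩ := hbdd
  set KF : ℝ := sSup ((fun x : ℝ × ℝ => |F x|) '' Om) with hKF
  set K : ℝ := KF / μ with hK
  have hFbdd : BddAbove ((fun x : ℝ × ℝ => |F x|) '' Om) :=
    (Om_compact.image hF.continuous.abs).bddAbove
  have hFle : ∀ x ∈ Om, |F x| ≤ KF := fun x hx => le_csSup hFbdd ⟨x, hx, rfl⟩
  have hKF0 : 0 ≤ KF := le_trans (abs_nonneg _) (hFle ((0:ℝ),(0:ℝ)) Om_zero_mem)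
  have hK0 : 0 ≤ K := div_nonneg hKF0 hμ.le
  have hμK : μ * K = KF := by
    rw [hK]; field_simp
  have hωbdd : ∀ τ : ℝ, ∀ x ∈ Om, |ω (τ, x)| ≤ C₀ := by
    intro τ x hx
    have hmem : |ω (τ, x)| ∈ (fun x : ℝ × ℝ => |ω (τ, x)|) '' Om := ⟨x, hx, rfl⟩
    refine le_trans (le_csSup ?_ hmem) (hC₀ τ)
    exact (Om_compact.image
      ((hω.continuous.comp (continuous_const.prodMk continuous_id)).abs)).bddAbove
  set C : ℝ := max C₀ K with hCdef
  have hKC : K ≤ C := le_max_right _ _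
  have hFup : ∀ x ∈ Om, F x ≤ μ * K := fun x hx =>
    le_trans (le_abs_self _) ((hFle x hx).trans_eq hμK.symm)
  have hFdown : ∀ x ∈ Om, -F x ≤ μ * K := fun x hx =>
    le_trans (neg_le_abs _) ((hFle x hx).trans_eq hμK.symm)
  have hCup : ∀ τ : ℝ, ∀ x ∈ Om, ω (τ, x) ≤ C := fun τ x hx =>
    le_trans (le_abs_self _) ((hωbdd τ x hx).trans (le_max_left _ _))
  have hCdown : ∀ τ : ℝ, ∀ x ∈ Om, -ω (τ, x) ≤ C := fun τ x hx =>
    le_trans (neg_le_abs _) ((hωbdd τ x hx).trans (le_max_left _ _))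
  have h1 : ∀ τ : ℝ, ∀ x ∈ Om, ω (τ, x) ≤ K :=
    key_bound ν μ hν hμ u1 u2 ω F hω hωper hPDE K C hKC hFup hCup
  have h2 : ∀ τ : ℝ, ∀ x ∈ Om, -ω (τ, x) ≤ K := by
    have hPDE' : ∀ p : ℝ × ℝ × ℝ,
        dt (fun q => -ω q) p + (u1 p * dx1 (fun q => -ω q) p + u2 p * dx2 (fun q => -ω q) p)
          = ν * lap (fun q => -ω q) p - μ * (fun q => -ω q) p + (fun y : ℝ × ℝ => -F y) p.2 := by
      intro p
      have h := hPDE p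
      simp only [dt_neg, dx1_neg, dx2_neg, lap_neg]
      ring_nf
      ring_nf at h
      linarith
    have hωper' : ∀ t x₁ x₂ : ℝ, (fun q => -ω q) (t, x₁ + 2 * π, x₂) = (fun q => -ω q) (t, x₁, x₂) ∧
        (fun q => -ω q) (t, x₁, x₂ + 2 * π) = (fun q => -ω q) (t, x₁, x₂) := by
      intro t x₁ x₂
      simp [(hωper t x₁ x₂).1, (hωper t x₁ x₂).2]
    exact key_bound ν μ hν hμ u1 u2 (fun q => -ω q) (fun y => -F y) hω.neg hωper' hPDE'
      K C hKC (fun x hx => hFdown x hx) (fun τ x hx => hCdown τ x hx)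
  refine csSup_le ((show Om.Nonempty from ⟨((0:ℝ),(0:ℝ)), Om_zero_mem⟩).image _) ?_
  rintro b ⟨x, hx, rfl⟩
  exact abs_le.mpr ⟨by linarith [h2 t x hx], h1 t x hx⟩
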